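/- For all β, λ ∈ ℂ and every m ∈ ℕ, one has ∑_{k=0}^{m} C(m,k) · (β/2−λ−m)_{m−k} · (−β/2−m+1)_{m−k} · (β/2−k)_{2k} = (λ)_m · (β/2)_m, where C(m,k) is the binomial coefficient. -/
import Mathlib


open Finset

/-- Ascending Pochhammer symbol `(a)_k = ∏_{i=0}^{k-1} (a+i)`. -/
noncomputable def poch (a : ℂ) (k : ℕ) : ℂ := ∏ i ∈ Finset.range k, (a + i)

/-- `R_k(y;α) = ∏_{l=1}^{k} (y - (α-l)(α-l+1))`. -/
noncomputable def Rpoly (y α : ℂ) (k : ℕ) : ℂ :=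
  ∏ l ∈ Finset.range k, (y - (α - (l + 1)) * (α - (l + 1) + 1))

/-- `R^(1)_k(y) = ∑_{j=1}^{k} (β/2-k+j+1)_{2(k-j)} (y - (β/2)(β/2+1)) R_{j-1}(y;k)`. -/
noncomputable def R1 (β y : ℂ) (k : ℕ) : ℂ :=
  ∑ j ∈ Finset.Icc 1 k,
    poch (β/2 - k + j + 1) (2*(k - j)) * (y - β/2*(β/2+1)) * Rpoly y k (j-1)

/-- `s^(-)_m(y)`. -/
noncomputable def sminus (β lam y : ℂ) (m : ℕ) : ℂ :=
  ∑ k ∈ Finset.range (m+1),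
    (m.choose k : ℂ) * poch (β/2 - lam - m) (m-k) * poch (-β/2 - m - 1) (m-k) * Rpoly y 0 k

/-- `s^(+)_m(y)`. -/
noncomputable def splus (β lam y : ℂ) (m : ℕ) : ℂ :=
  ∑ k ∈ Finset.range (m+1),
    (m.choose k : ℂ) * poch (β/2 - lam - m) (m-k) * poch (-β/2 - m + 1) (m-k) * Rpoly y 0 k

/-- Coefficients `D^(1)_k(m)`. -/
noncomputable def D1 (β lam : ℂ) (m k : ℕ) : ℂ :=
  if k = m then lam - β + 2*m
  else (m.choose k : ℂ) * poch (lam - β/2 + k + 1) (m-k) * poch (β/2 + k + 1) (m-k-1) *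
    ((k:ℂ)*(lam+β+2*m) + β/2*(lam-β-2*m))

/-- `s^(1)_m(y) = ∑_{k=0}^m D^(1)_k(m) R^(1)_k(y)`. -/
noncomputable def s1 (β lam y : ℂ) (m : ℕ) : ℂ :=
  ∑ k ∈ Finset.range (m+1), D1 β lam m k * R1 β y k

lemma poch_succ (a : ℂ) (n : ℕ) : poch a (n+1) = poch a n * (a + n) := by
  rw [poch, poch, Finset.prod_range_succ]

lemma poch_succ_left (a : ℂ) (n : ℕ) : poch a (n+1) = a * poch (a+1) n := by
  rw [poch, poch, Finset.prod_range_succ']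
  rw [Finset.prod_congr rfl (fun i _ => show a + ((i:ℕ)+1 : ℕ) = (a+1) + i by push_cast; ring)]
  push_cast
  ring

lemma poch_add (a : ℂ) (p q : ℕ) : poch a (p+q) = poch a p * poch (a + p) q := by
  rw [poch, poch, poch, Finset.prod_range_add]
  congr 1
  exact Finset.prod_congr rfl (fun i _ => by push_cast; ring)

lemma poch_neg (a : ℂ) (n : ℕ) : poch (1 - a - n) n = (-1)^n * poch a n := by
  induction n with
  | zero => simp [poch]
  | succ n ih =>
    have h : (1 : ℂ) - a - (n+1 : ℕ) = (-a - n) := by push_cast; ring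
    rw [h, poch_succ_left, show (-a - (n:ℂ) + 1) = 1 - a - n by ring, ih, poch_succ]
    -- (cast already normalized)
    ring

lemma key (m : ℕ) : ∀ A B : ℂ,
    ∑ k ∈ Finset.range (m+1), (m.choose k : ℂ) * (-1)^k * poch B k * poch (A + k) (m - k)
      = poch (A - B) m := by
  induction m with
  | zero => intro A B; simp [poch]
  | succ m ih =>
    intro A B
    rw [Finset.sum_range_succ']
    have hps : ∀ k ∈ Finset.range (m+1),
        ((m+1).choose (k+1) : ℂ) * (-1)^(k+1) * poch B (k+1) * poch (A + (k+1:ℕ)) (m+1 - (k+1))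
        = (m.choose k : ℂ) * (-1)^(k+1) * poch B (k+1) * poch (A + (k+1:ℕ)) (m+1 - (k+1))
          + (m.choose (k+1) : ℂ) * (-1)^(k+1) * poch B (k+1) * poch (A + (k+1:ℕ)) (m+1 - (k+1)) := by
      intro k _
      rw [Nat.choose_succ_succ]
      push_cast
      ring
    rw [Finset.sum_congr rfl hps, Finset.sum_add_distrib]
    -- second sum plus k=0 term reassembles to ∑_{k∈range(m+2)} C(m,k) g k
    have h2 : (∑ k ∈ Finset.range (m+1),
          (m.choose (k+1) : ℂ) * (-1)^(k+1) * poch B (k+1) * poch (A + (k+1:ℕ)) (m+1 - (k+1)))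
        + ((m+1).choose 0 : ℂ) * (-1)^0 * poch B 0 * poch (A + (0:ℕ)) (m+1-0)
        = ∑ k ∈ Finset.range (m+2), (m.choose k : ℂ) * (-1)^k * poch B k * poch (A + k) (m+1-k) := by
      conv_rhs => rw [Finset.sum_range_succ']
      norm_num
    have h3 : (∑ k ∈ Finset.range (m+2), (m.choose k : ℂ) * (-1)^k * poch B k * poch (A + k) (m+1-k))
        = ∑ k ∈ Finset.range (m+1), (m.choose k : ℂ) * (-1)^k * poch B k * poch (A + k) (m+1-k) := by
      rw [Finset.sum_range_succ, Nat.choose_succ_self]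
      simp
    rw [add_assoc, h2, h3]
    -- now handle the two sums
    have hS1 : ∑ k ∈ Finset.range (m+1), (m.choose k : ℂ) * (-1)^k * poch B k * poch (A + k) (m+1-k)
        = (A + m) * poch (A - B) m := by
      rw [← ih A B, Finset.mul_sum]
      apply Finset.sum_congr rfl
      intro k hk
      have hk' : k ≤ m := Nat.lt_succ_iff.mp (Finset.mem_range.mp hk)
      have : m + 1 - k = (m - k) + 1 := by omega
      rw [this, poch_succ]
      have : ((m - k : ℕ) : ℂ) = (m : ℂ) - k := by
        push_cast [Nat.cast_sub hk']; ring
      rw [this]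
      ring
    have hS2 : ∑ k ∈ Finset.range (m+1),
          (m.choose k : ℂ) * (-1)^(k+1) * poch B (k+1) * poch (A + (k+1:ℕ)) (m+1 - (k+1))
        = -B * poch (A - B) m := by
      have := ih (A+1) (B+1)
      rw [show (A+1) - (B+1) = A - B by ring] at this
      rw [← this, Finset.mul_sum]
      apply Finset.sum_congr rfl
      intro k _
      rw [poch_succ_left B k, show m + 1 - (k+1) = m - k by omega,
        show A + ((k:ℕ)+1 : ℕ) = (A + 1) + k by push_cast; ring]
      ring
    rw [hS2, hS1, poch_succ]
    -- (cast already normalized)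
    ring


/-- Lemma A.1, first identity: `∑_k C(m,k)(β/2-λ-m)_{m-k}(-β/2-m+1)_{m-k}(β/2-k)_{2k} = (λ)_m (β/2)_m`. -/
theorem sum_Cplus_poch (β lam : ℂ) (m : ℕ) :
    ∑ k ∈ Finset.range (m+1),
        (m.choose k : ℂ) * poch (β/2 - lam - m) (m-k) * poch (-β/2 - m + 1) (m-k) *
          poch (β/2 - (k:ℂ)) (2*k)
      = poch lam m * poch (β/2) m := by
  have hb : -β/2 = -(β/2) := by ring
  rw [hb]
  set x := β/2 with hx
  have hterm : ∀ k ∈ Finset.range (m+1),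
      (m.choose k : ℂ) * poch (x - lam - m) (m-k) * poch (-x - m + 1) (m-k) *
          poch (x - (k:ℂ)) (2*k)
      = ((m.choose k : ℂ) * (-1)^k * poch (1-x) k * poch ((lam + 1 - x) + k) (m-k)) * poch x m := by
    intro k hk
    have hk' : k ≤ m := Nat.lt_succ_iff.mp (Finset.mem_range.mp hk)
    have hcast : ((m - k : ℕ) : ℂ) = (m : ℂ) - k := by push_cast [Nat.cast_sub hk']; ring
    -- reflection 1
    have h1 : poch (x - lam - m) (m-k) = (-1)^(m-k) * poch (lam + 1 - x + k) (m-k) := by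
      have := poch_neg (lam + 1 - x + k) (m-k)
      rw [hcast] at this
      rw [show x - lam - (m:ℂ) = 1 - (lam + 1 - x + k) - ((m:ℂ) - k) by ring] at *
      exact this
    -- reflection 2
    have h2 : poch (-x - m + 1) (m-k) = (-1)^(m-k) * poch (x + k) (m-k) := by
      have := poch_neg (x + k) (m-k)
      rw [hcast] at this
      rw [show -x - (m:ℂ) + 1 = 1 - (x + k) - ((m:ℂ) - k) by ring]
      exact this
    -- split (x-k)_{2k} = (x-k)_k (x)_k
    have h3 : poch (x - k) (2*k) = (-1)^k * poch (1-x) k * poch x k := by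
      rw [show 2*k = k + k by ring, poch_add, show (x - (k:ℂ)) + k = x by ring]
      have := poch_neg (1-x) k
      rw [show (1:ℂ) - (1-x) - k = x - k by ring] at this
      rw [this]
    -- combine (x)_k (x+k)_{m-k} = (x)_m
    have h4 : poch x k * poch (x + k) (m-k) = poch x m := by
      rw [← poch_add x k (m-k), Nat.add_sub_cancel' hk']
    rw [h1, h2, h3]
    calc (m.choose k : ℂ) * ((-1)^(m-k) * poch (lam + 1 - x + k) (m-k)) *
          ((-1)^(m-k) * poch (x + k) (m-k)) * ((-1)^k * poch (1-x) k * poch x k)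
        = ((-1)^(m-k) * (-1)^(m-k)) * ((m.choose k : ℂ) * (-1)^k * poch (1-x) k *
            poch ((lam + 1 - x) + k) (m-k)) * (poch x k * poch (x + k) (m-k)) := by ring
      _ = _ := by
          rw [h4, ← pow_add, Even.neg_one_pow ⟨m-k, by ring⟩]
          ring
  rw [Finset.sum_congr rfl hterm, ← Finset.sum_mul, key m (lam + 1 - x) (1 - x),
    show (lam + 1 - x) - (1 - x) = lam by ring]
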